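/- Let q = 2^h (h ≥ 1), K = GF(q) ⊆ F = GF(q²), and a, β ∈ F with a ≠ 0, β^{q+1} = 1 and β ≠ 1; set b = βa and c = (1+β)a. If the quadratic form f in the four variables x₀,x₁,y₀,y₁ over K (defined below from a,b,c) can be written as a product of two linear forms with coefficients in an algebraic closure of K, then f can be written as a product of two linear forms with coefficients in K itself (so the projective quadric Ξ∞ defined by f in ℙ³(K) is a pair of planes over K). -/

import Mathlib

/-!
Since `Tr(ν) = 1`, telescoping `ν = ε² + ε` gives `ε^q = ε + 1`, so `u ↦ u^(q+1)` is the norm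
form `N(u₀ + εu₁) = u₀² + u₀u₁ + νu₁²` of `F/K`. Hence `c = a + b` and `N(a) = N(b)`.
If `f = L L'` over `K̄`, the polar form of `f` is `L ⊗ L' + L' ⊗ L`, of rank at most two, so its
Pfaffian `1 + N(c)` vanishes. Then `a₀b₁ + a₁b₀ = 1`, and one checks directly that
`f = (x₀ + y₀ + w(x₁ + y₁)) ((a₁+1)(x₀ + wx₁) + (b₁+1)(y₀ + wy₁) + x₁ + y₁)` with
`w = (c₀ + c₁ + 1)/c₁` when `c₁ ≠ 0`, while `c₁ = 0` forces `a₁ = b₁ = c₀ = 1` and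
`f = (x₁ + y₁)(x₀ + y₀ + (a₀+1)x₁ + (b₀+1)y₁)`.
-/

open Finset

section

variable {K : Type*} [Field K]

/-- The norm form of `K(ε)/K`, `ε² + ε = ν`, in the coordinates `u₀ + ε u₁`. -/
def normForm (ν u₀ u₁ : K) : K := u₀ ^ 2 + u₀ * u₁ + ν * u₁ ^ 2

/-- The form `f` defining `Ξ∞`, evaluated in a `K`-algebra `A`. -/
def xiForm {A : Type*} [CommRing A] [Algebra K A] (ν a₀ a₁ b₀ b₁ c₀ c₁ : K) (x₀ x₁ y₀ y₁ : A) :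
    A :=
  algebraMap K A (a₁ + 1) * x₀ ^ 2 + x₀ * x₁
    + algebraMap K A (a₀ + (1 + ν) * a₁ + ν) * x₁ ^ 2
    + algebraMap K A (b₁ + 1) * y₀ ^ 2 + y₀ * y₁
    + algebraMap K A (b₀ + (1 + ν) * b₁ + ν) * y₁ ^ 2
    + algebraMap K A c₁ * x₀ * y₀
    + algebraMap K A (c₀ + c₁) * x₀ * y₁
    + algebraMap K A (c₀ + c₁) * x₁ * y₀
    + algebraMap K A (c₀ + (1 + ν) * c₁) * x₁ * y₁

end

theorem sum_range_sq_add_self_pow_two_pow {R : Type*} [CommRing R] [CharP R 2] (x : R) (h : ℕ) :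
    ∑ i ∈ range h, (x ^ 2 + x) ^ 2 ^ i = x ^ 2 ^ h + x := by
  induction h with
  | zero => simp [CharTwo.add_self_eq_zero]
  | succ h ih =>
    rw [sum_range_succ, ih, add_pow_char_pow, ← pow_mul, ← pow_succ']
    linear_combination (norm := (ring_nf; reduce_mod_char!))

theorem pow_two_pow_eq_add_one {R A : Type*} [CommRing R] [CommRing A] [Algebra R A] [CharP A 2]
    {ν : R} {ε : A} {h : ℕ} (hε : ε ^ 2 + ε + algebraMap R A ν = 0)
    (hν : ∑ i ∈ range h, ν ^ 2 ^ i = 1) : ε ^ 2 ^ h = ε + 1 := by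
  have hεν : ε ^ 2 + ε = algebraMap R A ν := by
    linear_combination (norm := (ring_nf; reduce_mod_char!)) hε
  have htrace := sum_range_sq_add_self_pow_two_pow ε h
  simp only [hεν, ← map_pow, ← map_sum, hν, map_one] at htrace
  linear_combination (norm := (ring_nf; reduce_mod_char!)) htrace

section FiniteField

variable {K F : Type*} [Field K] [Fintype K] [Field F] [Algebra K F] {h : ℕ}

theorem algebraMap_pow_two_pow (hK : Fintype.card K = 2 ^ h) (k : K) :
    algebraMap K F k ^ 2 ^ h = algebraMap K F k := by
  rw [← map_pow, ← hK, FiniteField.pow_card]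

theorem notMem_range_algebraMap_of_pow_two_pow {ε : F} (hK : Fintype.card K = 2 ^ h)
    (hεq : ε ^ 2 ^ h = ε + 1) : ε ∉ Set.range (algebraMap K F) := by
  rintro ⟨k, rfl⟩
  rw [algebraMap_pow_two_pow hK] at hεq
  simp at hεq

theorem algebraMap_add_mul_pow_two_pow_add_one [CharP F 2] {ν : K} {ε : F}
    (hK : Fintype.card K = 2 ^ h) (hε : ε ^ 2 + ε + algebraMap K F ν = 0)
    (hεq : ε ^ 2 ^ h = ε + 1) (u₀ u₁ : K) :
    (algebraMap K F u₀ + ε * algebraMap K F u₁) ^ (2 ^ h + 1) =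
      algebraMap K F (normForm ν u₀ u₁) := by
  rw [pow_succ, add_pow_char_pow, mul_pow, algebraMap_pow_two_pow hK,
    algebraMap_pow_two_pow hK, hεq]
  simp only [normForm, map_add, map_mul, map_pow]
  linear_combination (norm := (ring_nf; reduce_mod_char!)) algebraMap K F u₁ ^ 2 * hε

end FiniteField

theorem eq_and_eq_of_algebraMap_add_mul_eq {K F : Type*} [Field K] [Field F] [Algebra K F]
    {ε : F} (hε : ε ∉ Set.range (algebraMap K F)) {u₀ u₁ v₀ v₁ : K}
    (h : algebraMap K F u₀ + ε * algebraMap K F u₁ = algebraMap K F v₀ + ε * algebraMap K F v₁) :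
    u₀ = v₀ ∧ u₁ = v₁ := by
  obtain h₁ | h₁ := eq_or_ne u₁ v₁
  · subst h₁
    exact ⟨(algebraMap K F).injective (add_right_cancel h), rfl⟩
  · refine absurd ⟨(v₀ - u₀) / (u₁ - v₁), ?_⟩ hε
    have : algebraMap K F (u₁ - v₁) ≠ 0 := by simpa [sub_eq_zero] using h₁
    rw [map_div₀, div_eq_iff this, map_sub, map_sub]
    linear_combination -h

theorem plucker_relation_of_charTwo {R : Type*} [CommRing R] [CharP R 2]
    (l m n r l' m' n' r' : R) :
    (l * m' + m * l') * (n * r' + r * n') + (l * n' + n * l') * (m * r' + r * m')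
      + (l * r' + r * l') * (m * n' + n * m') = 0 := by
  linear_combination (norm := (ring_nf; reduce_mod_char!))

section XiForm

variable {K A : Type*} [Field K] [CommRing A] [Algebra K A] [CharP A 2]

theorem algebraMap_normForm_eq_one_of_xiForm_eq_mul {ν a₀ a₁ b₀ b₁ c₀ c₁ : K}
    {l m n r l' m' n' r' : A}
    (H : ∀ x₀ x₁ y₀ y₁ : A, xiForm ν a₀ a₁ b₀ b₁ c₀ c₁ x₀ x₁ y₀ y₁ =
      (l * x₀ + m * x₁ + n * y₀ + r * y₁) * (l' * x₀ + m' * x₁ + n' * y₀ + r' * y₁)) :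
    algebraMap K A (normForm ν c₀ c₁) = 1 := by
  simp only [xiForm, map_add, map_mul, map_one] at H
  have p₀₁ : l * m' + m * l' = 1 := by linear_combination H 1 0 0 0 + H 0 1 0 0 - H 1 1 0 0
  have p₂₃ : n * r' + r * n' = 1 := by linear_combination H 0 0 1 0 + H 0 0 0 1 - H 0 0 1 1
  have p₀₂ : l * n' + n * l' = algebraMap K A c₁ := by
    linear_combination H 1 0 0 0 + H 0 0 1 0 - H 1 0 1 0
  have p₁₃ : m * r' + r * m' =
      algebraMap K A c₀ + (1 + algebraMap K A ν) * algebraMap K A c₁ := by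
    linear_combination H 0 1 0 0 + H 0 0 0 1 - H 0 1 0 1
  have p₀₃ : l * r' + r * l' = algebraMap K A c₀ + algebraMap K A c₁ := by
    linear_combination H 1 0 0 0 + H 0 0 0 1 - H 1 0 0 1
  have p₁₂ : m * n' + n * m' = algebraMap K A c₀ + algebraMap K A c₁ := by
    linear_combination H 0 1 0 0 + H 0 0 1 0 - H 0 1 1 0
  have pfaffian := plucker_relation_of_charTwo l m n r l' m' n' r'
  rw [p₀₁, p₂₃, p₀₂, p₁₃, p₀₃, p₁₂] at pfaffian
  simp only [normForm, map_add, map_mul, map_pow]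
  linear_combination (norm := (ring_nf; reduce_mod_char!)) pfaffian

theorem xiForm_eq_mul_of_root {ν a₀ a₁ b₀ b₁ w : K}
    (hw : (a₁ + b₁) * w = a₀ + b₀ + a₁ + b₁ + 1)
    (hwa : (a₁ + 1) * w ^ 2 + w = a₀ + (1 + ν) * a₁ + ν)
    (hwb : (b₁ + 1) * w ^ 2 + w = b₀ + (1 + ν) * b₁ + ν) (x₀ x₁ y₀ y₁ : A) :
    xiForm ν a₀ a₁ b₀ b₁ (a₀ + b₀) (a₁ + b₁) x₀ x₁ y₀ y₁ =
      (x₀ + y₀ + algebraMap K A w * (x₁ + y₁)) *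
        (algebraMap K A (a₁ + 1) * (x₀ + algebraMap K A w * x₁)
          + algebraMap K A (b₁ + 1) * (y₀ + algebraMap K A w * y₁) + x₁ + y₁) := by
  apply_fun algebraMap K A at hw hwa hwb
  simp only [xiForm, map_add, map_mul, map_pow, map_one] at hw hwa hwb ⊢
  linear_combination (norm := (ring_nf; reduce_mod_char!))
    x₁ ^ 2 * hwa + y₁ ^ 2 * hwb + (x₀ * y₁ + x₁ * y₀) * hw + x₁ * y₁ * (hwa + hwb)

theorem xiForm_eq_mul_of_add_eq_one {ν a₀ b₀ : K} (hab : a₀ + b₀ = 1) (x₀ x₁ y₀ y₁ : A) :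
    xiForm ν a₀ 1 b₀ 1 (a₀ + b₀) (1 + 1) x₀ x₁ y₀ y₁ =
      (x₁ + y₁) * (x₀ + y₀ + algebraMap K A (a₀ + 1) * x₁ + algebraMap K A (b₀ + 1) * y₁) := by
  apply_fun algebraMap K A at hab
  simp only [xiForm, map_add, map_mul, map_one] at hab ⊢
  linear_combination (norm := (ring_nf; reduce_mod_char!)) (x₀ * y₁ + x₁ * y₀) * hab

theorem exists_xiForm_eq_mul [CharP K 2] {ν a₀ a₁ b₀ b₁ : K}
    (hN : normForm ν a₀ a₁ = normForm ν b₀ b₁) (hNc : normForm ν (a₀ + b₀) (a₁ + b₁) = 1) :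
    ∃ l m n r l' m' n' r' : K, ∀ x₀ x₁ y₀ y₁ : A,
      xiForm ν a₀ a₁ b₀ b₁ (a₀ + b₀) (a₁ + b₁) x₀ x₁ y₀ y₁ =
        (algebraMap K A l * x₀ + algebraMap K A m * x₁
            + algebraMap K A n * y₀ + algebraMap K A r * y₁)
          * (algebraMap K A l' * x₀ + algebraMap K A m' * x₁
            + algebraMap K A n' * y₀ + algebraMap K A r' * y₁) := by
  unfold normForm at hN hNc
  have hD : a₀ * b₁ + a₁ * b₀ = 1 := by
    linear_combination (norm := (ring_nf; reduce_mod_char!)) hNc - hN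
  obtain ht | ht := eq_or_ne (a₁ + b₁) 0
  · have hb₁ : b₁ = a₁ := by linear_combination (norm := (ring_nf; reduce_mod_char!)) ht
    subst b₁
    have hab : a₀ + b₀ = 1 := by
      rw [ht] at hNc
      have hsq : (a₀ + b₀ + 1) ^ 2 = 0 := by
        linear_combination (norm := (ring_nf; reduce_mod_char!)) hNc
      linear_combination (norm := (ring_nf; reduce_mod_char!))
        (pow_eq_zero_iff two_ne_zero).mp hsq
    have ha₁ : a₁ = 1 := by linear_combination hD - a₁ * hab
    subst a₁
    refine ⟨0, 1, 0, 1, 1, a₀ + 1, 1, b₀ + 1, fun x₀ x₁ y₀ y₁ => ?_⟩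
    rw [xiForm_eq_mul_of_add_eq_one hab]
    simp only [map_zero, map_one]
    ring
  · obtain ⟨w, hw⟩ : ∃ w, (a₁ + b₁) * w = a₀ + b₀ + a₁ + b₁ + 1 := ⟨_, mul_div_cancel₀ _ ht⟩
    have hwa : (a₁ + 1) * w ^ 2 + w = a₀ + (1 + ν) * a₁ + ν := by
      apply mul_left_cancel₀ (pow_ne_zero 2 ht)
      linear_combination (norm := (ring_nf; reduce_mod_char!))
        ((a₁ + 1) * ((a₁ + b₁) * w + (a₀ + b₀ + a₁ + b₁ + 1)) + (a₁ + b₁)) * hw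
          + (a₁ + 1) * hNc + (a₁ + b₁) * hD
    have hwb : (b₁ + 1) * w ^ 2 + w = b₀ + (1 + ν) * b₁ + ν := by
      apply mul_left_cancel₀ (pow_ne_zero 2 ht)
      linear_combination (norm := (ring_nf; reduce_mod_char!))
        ((b₁ + 1) * ((a₁ + b₁) * w + (a₀ + b₀ + a₁ + b₁ + 1)) + (a₁ + b₁)) * hw
          + (b₁ + 1) * hNc + (a₁ + b₁) * hD
    refine ⟨1, w, 1, w, a₁ + 1, (a₁ + 1) * w + 1, b₁ + 1, (b₁ + 1) * w + 1,
      fun x₀ x₁ y₀ y₁ => ?_⟩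
    rw [xiForm_eq_mul_of_root hw hwa hwb]
    simp only [map_add, map_mul, map_one]
    ring

end XiForm

theorem stmt_12_general
    (h q : ℕ) (hq : q = 2 ^ h)
    (K F : Type) [Field K] [Fintype K] [Field F] [Algebra K F]
    (hK : Fintype.card K = q)
    (ν : K) (hν : ∑ i ∈ Finset.range h, ν ^ 2 ^ i = 1)
    (ε : F) (hε : ε ^ 2 + ε + algebraMap K F ν = 0)
    (a₀ a₁ b₀ b₁ c₀ c₁ : K) (β : F)
    (hβ1 : β ^ (q + 1) = 1)
    (hb : algebraMap K F b₀ + ε * algebraMap K F b₁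
        = β * (algebraMap K F a₀ + ε * algebraMap K F a₁))
    (hc : algebraMap K F c₀ + ε * algebraMap K F c₁
        = (1 + β) * (algebraMap K F a₀ + ε * algebraMap K F a₁))
    (hfac : ∃ l m n r l' m' n' r' : AlgebraicClosure K,
      ∀ x₀ x₁ y₀ y₁ : AlgebraicClosure K,
        algebraMap K (AlgebraicClosure K) (a₁ + 1) * x₀ ^ 2 + x₀ * x₁
          + algebraMap K (AlgebraicClosure K) (a₀ + (1 + ν) * a₁ + ν) * x₁ ^ 2
          + algebraMap K (AlgebraicClosure K) (b₁ + 1) * y₀ ^ 2 + y₀ * y₁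
          + algebraMap K (AlgebraicClosure K) (b₀ + (1 + ν) * b₁ + ν) * y₁ ^ 2
          + algebraMap K (AlgebraicClosure K) c₁ * x₀ * y₀
          + algebraMap K (AlgebraicClosure K) (c₀ + c₁) * x₀ * y₁
          + algebraMap K (AlgebraicClosure K) (c₀ + c₁) * x₁ * y₀
          + algebraMap K (AlgebraicClosure K) (c₀ + (1 + ν) * c₁) * x₁ * y₁
        = (l * x₀ + m * x₁ + n * y₀ + r * y₁)
            * (l' * x₀ + m' * x₁ + n' * y₀ + r' * y₁)) :
    ∃ l m n r l' m' n' r' : K,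
      ∀ x₀ x₁ y₀ y₁ : AlgebraicClosure K,
        algebraMap K (AlgebraicClosure K) (a₁ + 1) * x₀ ^ 2 + x₀ * x₁
          + algebraMap K (AlgebraicClosure K) (a₀ + (1 + ν) * a₁ + ν) * x₁ ^ 2
          + algebraMap K (AlgebraicClosure K) (b₁ + 1) * y₀ ^ 2 + y₀ * y₁
          + algebraMap K (AlgebraicClosure K) (b₀ + (1 + ν) * b₁ + ν) * y₁ ^ 2
          + algebraMap K (AlgebraicClosure K) c₁ * x₀ * y₀
          + algebraMap K (AlgebraicClosure K) (c₀ + c₁) * x₀ * y₁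
          + algebraMap K (AlgebraicClosure K) (c₀ + c₁) * x₁ * y₀
          + algebraMap K (AlgebraicClosure K) (c₀ + (1 + ν) * c₁) * x₁ * y₁
        = (algebraMap K (AlgebraicClosure K) l * x₀
              + algebraMap K (AlgebraicClosure K) m * x₁
              + algebraMap K (AlgebraicClosure K) n * y₀
              + algebraMap K (AlgebraicClosure K) r * y₁)
            * (algebraMap K (AlgebraicClosure K) l' * x₀
              + algebraMap K (AlgebraicClosure K) m' * x₁
              + algebraMap K (AlgebraicClosure K) n' * y₀
              + algebraMap K (AlgebraicClosure K) r' * y₁) := by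
  subst hq
  have : CharP K 2 := charP_of_card_eq_prime_pow hK
  have : CharP F 2 := charP_of_injective_algebraMap' K 2
  have : CharP (AlgebraicClosure K) 2 := charP_of_injective_algebraMap' K 2
  have hεq : ε ^ 2 ^ h = ε + 1 := pow_two_pow_eq_add_one hε hν
  obtain ⟨rfl, rfl⟩ : c₀ = a₀ + b₀ ∧ c₁ = a₁ + b₁ :=
    eq_and_eq_of_algebraMap_add_mul_eq (notMem_range_algebraMap_of_pow_two_pow hK hεq)
      (by rw [hc, map_add, map_add]; linear_combination -hb)
  have hN : normForm ν a₀ a₁ = normForm ν b₀ b₁ := by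
    apply (algebraMap K F).injective
    rw [← algebraMap_add_mul_pow_two_pow_add_one hK hε hεq,
      ← algebraMap_add_mul_pow_two_pow_add_one hK hε hεq, hb, mul_pow, hβ1, one_mul]
  obtain ⟨l, m, n, r, l', m', n', r', H⟩ := hfac
  have hNc : normForm ν (a₀ + b₀) (a₁ + b₁) = 1 := (algebraMap K (AlgebraicClosure K)).injective
    (by rw [map_one]; exact algebraMap_normForm_eq_one_of_xiForm_eq_mul H)
  exact exists_xiForm_eq_mul hN hNc

/-- Lemma 3.3 of the paper: with `b = βa`, `c = (1+β)a`, `a ≠ 0`, `β^{q+1} = 1`,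
`β ≠ 1` (the normal form for a hyperbolic quadric meeting `ℋ` at infinity in
two lines), if the quadratic form `f` over `K = GF(q)` describing `Ξ∞` splits
into two linear factors over an algebraic closure of `K`, then it splits into
two linear factors with coefficients in `K` itself, i.e. `Ξ∞` is a pair of
planes over `GF(q)`. -/
theorem stmt_12
    (h q : ℕ) (hh : 1 ≤ h) (hq : q = 2 ^ h)
    (K F : Type) [Field K] [Fintype K] [Field F] [Fintype F] [Algebra K F]
    (hK : Fintype.card K = q) (hF : Fintype.card F = q ^ 2)
    (ν : K) (hν : ∑ i ∈ Finset.range h, ν ^ 2 ^ i = 1)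
    (ε : F) (hε : ε ^ 2 + ε + algebraMap K F ν = 0)
    (a₀ a₁ b₀ b₁ c₀ c₁ : K) (β : F)
    (hβ1 : β ^ (q + 1) = 1) (hβ2 : β ≠ 1)
    (ha : algebraMap K F a₀ + ε * algebraMap K F a₁ ≠ 0)
    (hb : algebraMap K F b₀ + ε * algebraMap K F b₁
        = β * (algebraMap K F a₀ + ε * algebraMap K F a₁))
    (hc : algebraMap K F c₀ + ε * algebraMap K F c₁
        = (1 + β) * (algebraMap K F a₀ + ε * algebraMap K F a₁))
    (hfac : ∃ l m n r l' m' n' r' : AlgebraicClosure K,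
      ∀ x₀ x₁ y₀ y₁ : AlgebraicClosure K,
        algebraMap K (AlgebraicClosure K) (a₁ + 1) * x₀ ^ 2 + x₀ * x₁
          + algebraMap K (AlgebraicClosure K) (a₀ + (1 + ν) * a₁ + ν) * x₁ ^ 2
          + algebraMap K (AlgebraicClosure K) (b₁ + 1) * y₀ ^ 2 + y₀ * y₁
          + algebraMap K (AlgebraicClosure K) (b₀ + (1 + ν) * b₁ + ν) * y₁ ^ 2
          + algebraMap K (AlgebraicClosure K) c₁ * x₀ * y₀
          + algebraMap K (AlgebraicClosure K) (c₀ + c₁) * x₀ * y₁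
          + algebraMap K (AlgebraicClosure K) (c₀ + c₁) * x₁ * y₀
          + algebraMap K (AlgebraicClosure K) (c₀ + (1 + ν) * c₁) * x₁ * y₁
        = (l * x₀ + m * x₁ + n * y₀ + r * y₁)
            * (l' * x₀ + m' * x₁ + n' * y₀ + r' * y₁)) :
    ∃ l m n r l' m' n' r' : K,
      ∀ x₀ x₁ y₀ y₁ : AlgebraicClosure K,
        algebraMap K (AlgebraicClosure K) (a₁ + 1) * x₀ ^ 2 + x₀ * x₁
          + algebraMap K (AlgebraicClosure K) (a₀ + (1 + ν) * a₁ + ν) * x₁ ^ 2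
          + algebraMap K (AlgebraicClosure K) (b₁ + 1) * y₀ ^ 2 + y₀ * y₁
          + algebraMap K (AlgebraicClosure K) (b₀ + (1 + ν) * b₁ + ν) * y₁ ^ 2
          + algebraMap K (AlgebraicClosure K) c₁ * x₀ * y₀
          + algebraMap K (AlgebraicClosure K) (c₀ + c₁) * x₀ * y₁
          + algebraMap K (AlgebraicClosure K) (c₀ + c₁) * x₁ * y₀
          + algebraMap K (AlgebraicClosure K) (c₀ + (1 + ν) * c₁) * x₁ * y₁
        = (algebraMap K (AlgebraicClosure K) l * x₀
              + algebraMap K (AlgebraicClosure K) m * x₁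
              + algebraMap K (AlgebraicClosure K) n * y₀
              + algebraMap K (AlgebraicClosure K) r * y₁)
            * (algebraMap K (AlgebraicClosure K) l' * x₀
              + algebraMap K (AlgebraicClosure K) m' * x₁
              + algebraMap K (AlgebraicClosure K) n' * y₀
              + algebraMap K (AlgebraicClosure K) r' * y₁) :=
  stmt_12_general h q hq K F hK ν hν ε hε a₀ a₁ b₀ b₁ c₀ c₁ β hβ1 hb hc hfac
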